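/- arXiv:2201.12797 — 2 statements merged into one kernel-verified Lean document; each statement's English description precedes it below -/
import Mathlib

section
/- Let (λ_i)_{i≥1} be a sequence of positive reals, α ∈ (0,1], and suppose ∑_{i=1}^∞ e^{-2λ_i u} ≤ e^{-λ_1 u} γ(u) for all u > 0, where γ : (0,∞) → (0,∞) is decreasing with γ(u) < ∞ for u > 0. Then there exists a constant c > 0 such that for all ε ∈ (0,1], ∑_{i=1}^∞ λ_i^{-(1+α)} e^{-2λ_i ε} ≤ c (1 + ∫_ε^1 γ(u) u^α du). -/
open MeasureTheory Real Set
open scoped Nat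

/-! The Gamma integral gives `λ^{-(1+α)} e^{-2λε} = 2^{1+α} Γ(1+α)⁻¹ ∫_ε^∞ (u-ε)^α e^{-2λu} du`.
Summing over `i` under the integral (Tonelli, in `ℝ≥0∞`) and applying the hypothesis pointwise
bounds the series by a constant times `∫_ε^∞ u^α e^{-λ₀u} γ(u) du`. On `(ε, 1]` this integrand is
at most `γ(u) u^α`; on `(1, ∞)` it is at most `γ(1) u^α e^{-λ₀u}`, whose integral is again a
Gamma integral. -/

lemma rpow_le_mul_exp {x p s : ℝ} (hx : 0 < x) (hp : 0 ≤ p) (hs : 0 < s) :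
    x ^ p ≤ (1 + ⌈p⌉₊ ! / s ^ ⌈p⌉₊) * exp (s * x) := by
  set n := ⌈p⌉₊
  have hpow : x ^ p ≤ 1 + x ^ n := by
    rcases le_or_gt x 1 with hx1 | hx1
    · linarith [rpow_le_one hx.le hx1 hp, pow_nonneg hx.le n]
    · have := rpow_le_rpow_of_exponent_le hx1.le (Nat.le_ceil p)
      rw [rpow_natCast] at this
      linarith
  have hxn : x ^ n ≤ n ! / s ^ n * exp (s * x) := by
    have := pow_div_factorial_le_exp _ (mul_pos hs hx).le n
    rw [div_le_iff₀ (by positivity)] at this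
    rw [div_mul_eq_mul_div, le_div_iff₀ (by positivity)]
    calc x ^ n * s ^ n = (s * x) ^ n := by ring
      _ ≤ _ := by linarith
  have hexp : 1 ≤ exp (s * x) := one_le_exp (mul_pos hs hx).le
  nlinarith

lemma summable_exp_neg_of_summable_rpow_neg_mul_exp_neg {lam : ℕ → ℝ} (hlam : ∀ i, 0 < lam i)
    {p ε u : ℝ} (hp : 0 ≤ p) (hεu : ε < u)
    (hsum : Summable fun i => lam i ^ (-p) * exp (-2 * lam i * ε)) :
    Summable fun i => exp (-2 * lam i * u) := by
  set C := 1 + ⌈p⌉₊ ! / (2 * (u - ε)) ^ ⌈p⌉₊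
  refine (hsum.mul_left C).of_nonneg_of_le (fun i => (exp_pos _).le) fun i => ?_
  have hbound := rpow_le_mul_exp (hlam i) hp (s := 2 * (u - ε)) (by linarith)
  have hsplit : exp (-2 * lam i * u) = exp (-(2 * (u - ε) * lam i)) * exp (-2 * lam i * ε) := by
    rw [← exp_add]; ring_nf
  rw [hsplit, rpow_neg (hlam i).le, ← mul_assoc]
  gcongr
  rw [exp_neg, ← div_eq_mul_inv, le_div_iff₀ (rpow_pos_of_pos (hlam i) p),
    inv_mul_le_iff₀ (exp_pos _), mul_comm]
  exact hbound

lemma integrableOn_rpow_sub_one_mul_exp_neg_mul {β r : ℝ} (hβ : 0 < β) (hr : 0 < r) :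
    IntegrableOn (fun t : ℝ => t ^ (β - 1) * exp (-(r * t))) (Ioi 0) := by
  refine (integrableOn_rpow_mul_exp_neg_mul_rpow (s := β - 1) (by linarith) one_pos hr).congr_fun
    (fun t _ => ?_) measurableSet_Ioi
  simp only [rpow_one, neg_mul]

lemma lintegral_Ioi_rpow_sub_mul_exp_neg_mul {β r : ℝ} (hβ : 0 < β) (hr : 0 < r) (ε : ℝ) :
    ∫⁻ u in Ioi ε, ENNReal.ofReal ((u - ε) ^ (β - 1) * exp (-(r * u)))
      = ENNReal.ofReal (Gamma β * r ^ (-β) * exp (-(r * ε))) := by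
  have hshift := (measurePreserving_add_right volume ε).setLIntegral_comp_preimage_emb
    (measurableEmbedding_addRight ε)
    (fun u => ENNReal.ofReal ((u - ε) ^ (β - 1) * exp (-(r * u)))) (Ioi ε)
  rw [preimage_add_const_Ioi, sub_self] at hshift
  have hfactor : ∀ t : ℝ, (t + ε - ε) ^ (β - 1) * exp (-(r * (t + ε)))
      = t ^ (β - 1) * exp (-(r * t)) * exp (-(r * ε)) := fun t => by
    rw [add_sub_cancel_right, mul_add, neg_add, exp_add, mul_assoc]
  simp only [hfactor] at hshift
  rw [← hshift, ← ofReal_integral_eq_lintegral_ofReal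
      ((integrableOn_rpow_sub_one_mul_exp_neg_mul hβ hr).mul_const _),
    integral_mul_const, integral_rpow_mul_exp_neg_mul_Ioi hβ hr,
    one_div, inv_rpow hr.le, ← rpow_neg hr.le, mul_comm (r ^ (-β))]
  filter_upwards [self_mem_ae_restrict measurableSet_Ioi] with t ht
  have ht0 : (0 : ℝ) < t := ht
  positivity

lemma tsum_ofReal_rpow_neg_mul_exp_eq_lintegral {lam : ℕ → ℝ} (hlam : ∀ i, 0 < lam i)
    {α : ℝ} (hα : -1 < α) (ε : ℝ) :
    ∑' i, ENNReal.ofReal (lam i ^ (-(1 + α)) * exp (-2 * lam i * ε))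
      = ENNReal.ofReal (2 ^ (1 + α) / Gamma (1 + α))
        * ∫⁻ u in Ioi ε, ∑' i, ENNReal.ofReal ((u - ε) ^ α * exp (-2 * lam i * u)) := by
  have hβ : 0 < 1 + α := by linarith
  have hterm : ∀ i, ENNReal.ofReal (lam i ^ (-(1 + α)) * exp (-2 * lam i * ε))
      = ENNReal.ofReal (2 ^ (1 + α) / Gamma (1 + α))
        * ∫⁻ u in Ioi ε, ENNReal.ofReal ((u - ε) ^ α * exp (-2 * lam i * u)) := fun i => by
    have h2l : 0 < 2 * lam i := by linarith [hlam i]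
    have := lintegral_Ioi_rpow_sub_mul_exp_neg_mul hβ h2l ε
    simp only [add_sub_cancel_left, neg_mul_eq_neg_mul] at this
    rw [this, ← ENNReal.ofReal_mul (by positivity), mul_rpow zero_le_two (hlam i).le,
      rpow_neg zero_le_two, rpow_neg (hlam i).le]
    congr 1
    field_simp
  simp only [hterm, ENNReal.tsum_mul_left]
  rw [lintegral_tsum fun i => by fun_prop]

lemma tsum_ofReal_rpow_neg_mul_exp_le {lam : ℕ → ℝ} (hlam : ∀ i, 0 < lam i)
    {α : ℝ} (hα : 0 ≤ α) {γ : ℝ → ℝ}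
    (hbound : ∀ u : ℝ, 0 < u →
      ∑' i, exp (-2 * lam i * u) ≤ exp (-lam 0 * u) * γ u)
    {ε : ℝ} (hε : 0 ≤ ε)
    (hsum : Summable fun i => lam i ^ (-(1 + α)) * exp (-2 * lam i * ε)) :
    ∑' i, ENNReal.ofReal (lam i ^ (-(1 + α)) * exp (-2 * lam i * ε))
      ≤ ENNReal.ofReal (2 ^ (1 + α) / Gamma (1 + α))
        * ∫⁻ u in Ioi ε, ENNReal.ofReal (u ^ α) * ENNReal.ofReal (exp (-lam 0 * u) * γ u) := by
  rw [tsum_ofReal_rpow_neg_mul_exp_eq_lintegral hlam (by linarith) ε]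
  gcongr 1
  refine setLIntegral_mono' measurableSet_Ioi fun u (hu : ε < u) => ?_
  have hu0 : 0 ≤ u - ε := by linarith
  -- `hbound` is informative only where `∑ e^{-2λᵢu}` converges, since `tsum` is `0` otherwise.
  calc ∑' i, ENNReal.ofReal ((u - ε) ^ α * exp (-2 * lam i * u))
      = ENNReal.ofReal ((u - ε) ^ α) * ENNReal.ofReal (∑' i, exp (-2 * lam i * u)) := by
        simp only [ENNReal.ofReal_mul (rpow_nonneg hu0 α), ENNReal.tsum_mul_left]
        rw [ENNReal.ofReal_tsum_of_nonneg (fun i => (exp_pos _).le)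
          (summable_exp_neg_of_summable_rpow_neg_mul_exp_neg hlam (by linarith) hu hsum)]
    _ ≤ ENNReal.ofReal (u ^ α) * ENNReal.ofReal (exp (-lam 0 * u) * γ u) := by
        gcongr
        · linarith
        · exact hbound u (by linarith)

lemma lintegral_Ioi_rpow_mul_exp_mul_le {α : ℝ} (hα : 0 ≤ α) {a : ℝ} (ha : 0 < a) {γ : ℝ → ℝ}
    (hγ : ∀ u, 0 < u → 0 ≤ γ u) (hγanti : AntitoneOn γ (Ioi 0)) {ε : ℝ} (hε : ε ∈ Ioc 0 1) :
    ∫⁻ u in Ioi ε, ENNReal.ofReal (u ^ α) * ENNReal.ofReal (exp (-a * u) * γ u)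
      ≤ ENNReal.ofReal (∫ u in ε..1, γ u * u ^ α)
        + ENNReal.ofReal (γ 1 * (Gamma (1 + α) * a ^ (-(1 + α)))) := by
  obtain ⟨hε0, hε1⟩ := hε
  have hγint : IntervalIntegrable (fun u => γ u * u ^ α) volume ε 1 := by
    refine (hγanti.mono ?_).intervalIntegrable.mul_continuousOn ?_
    · rw [uIcc_of_le hε1]; exact fun u hu => hε0.trans_le hu.1
    · exact (continuous_rpow_const hα).continuousOn
  rw [← Ioc_union_Ioi_eq_Ioi hε1, lintegral_union measurableSet_Ioi Ioc_disjoint_Ioi_same]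
  gcongr
  · rw [intervalIntegral.integral_of_le hε1, ofReal_integral_eq_lintegral_ofReal
      ((intervalIntegrable_iff_integrableOn_Ioc_of_le hε1).mp hγint)]
    · refine setLIntegral_mono' measurableSet_Ioc fun u hu => ?_
      have hu0 : 0 < u := hε0.trans hu.1
      rw [← ENNReal.ofReal_mul (rpow_nonneg hu0.le α), mul_comm]
      gcongr
      exact mul_le_of_le_one_left (hγ u hu0) (exp_le_one_iff.mpr (by nlinarith))
    · filter_upwards [self_mem_ae_restrict measurableSet_Ioc] with u hu
      have hu0 : 0 < u := hε0.trans hu.1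
      exact mul_nonneg (hγ u hu0) (rpow_nonneg hu0.le α)
  · have hgamma := lintegral_Ioi_rpow_sub_mul_exp_neg_mul (by linarith : 0 < 1 + α) ha 0
    simp only [sub_zero, add_sub_cancel_left, mul_zero, neg_zero, exp_zero, mul_one] at hgamma
    calc ∫⁻ u in Ioi 1, ENNReal.ofReal (u ^ α) * ENNReal.ofReal (exp (-a * u) * γ u)
        ≤ ∫⁻ u in Ioi 1, ENNReal.ofReal (γ 1) * ENNReal.ofReal (u ^ α * exp (-(a * u))) := by
          refine setLIntegral_mono' measurableSet_Ioi fun u (hu : 1 < u) => ?_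
          rw [← ENNReal.ofReal_mul (rpow_nonneg (by linarith) α),
            ← ENNReal.ofReal_mul (hγ 1 one_pos)]
          refine ENNReal.ofReal_le_ofReal ?_
          have hγu : γ u ≤ γ 1 := hγanti (mem_Ioi.mpr one_pos) (mem_Ioi.mpr (by linarith)) hu.le
          calc u ^ α * (exp (-a * u) * γ u) ≤ u ^ α * (exp (-a * u) * γ 1) := by gcongr
            _ = γ 1 * (u ^ α * exp (-(a * u))) := by ring_nf
      _ ≤ ∫⁻ u in Ioi 0, ENNReal.ofReal (γ 1) * ENNReal.ofReal (u ^ α * exp (-(a * u))) :=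
          lintegral_mono_set (Ioi_subset_Ioi zero_le_one)
      _ = ENNReal.ofReal (γ 1 * (Gamma (1 + α) * a ^ (-(1 + α)))) := by
          rw [lintegral_const_mul' _ _ ENNReal.ofReal_ne_top, hgamma,
            ← ENNReal.ofReal_mul (hγ 1 one_pos)]

theorem spectral_sum_estimate_general (lam : ℕ → ℝ) (hlam : ∀ i, 0 < lam i)
    (α : ℝ) (hα : α ∈ Set.Ioc (0 : ℝ) 1)
    (γ : ℝ → ℝ)
    (hγanti : AntitoneOn γ (Set.Ioi 0))
    (hbound : ∀ u : ℝ, 0 < u →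
      ∑' i, Real.exp (-2 * lam i * u) ≤ Real.exp (-lam 0 * u) * γ u) :
    ∃ c : ℝ, 0 < c ∧ ∀ ε : ℝ, ε ∈ Set.Ioc (0 : ℝ) 1 →
      ∑' i, (lam i) ^ (-(1 + α)) * Real.exp (-2 * lam i * ε)
        ≤ c * (1 + ∫ u in ε..1, γ u * u ^ α) := by
  have hα0 : 0 ≤ α := hα.1.le
  have hγ : ∀ u, 0 < u → 0 ≤ γ u := fun u hu => nonneg_of_mul_nonneg_right
    ((tsum_nonneg fun i => (exp_pos _).le).trans (hbound u hu)) (exp_pos _)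
  set A := 2 ^ (1 + α) / Gamma (1 + α)
  set K := γ 1 * (Gamma (1 + α) * lam 0 ^ (-(1 + α)))
  have hA : 0 < A := by positivity
  have hK : 0 ≤ K := mul_nonneg (hγ 1 one_pos) (by have := hlam 0; positivity)
  refine ⟨A * (1 + K), by positivity, fun ε hε => ?_⟩
  set I := ∫ u in ε..1, γ u * u ^ α
  have hI : 0 ≤ I := intervalIntegral.integral_nonneg hε.2 fun u hu =>
    mul_nonneg (hγ u (hε.1.trans_le hu.1)) (rpow_nonneg (hε.1.le.trans hu.1) α)
  by_cases hsum : Summable fun i => lam i ^ (-(1 + α)) * exp (-2 * lam i * ε)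
  · rw [← ENNReal.ofReal_le_ofReal_iff (by positivity), ENNReal.ofReal_tsum_of_nonneg
      (fun i => mul_nonneg (rpow_nonneg (hlam i).le _) (exp_pos _).le) hsum]
    calc _ ≤ ENNReal.ofReal A * ∫⁻ u in Ioi ε,
          ENNReal.ofReal (u ^ α) * ENNReal.ofReal (exp (-lam 0 * u) * γ u) :=
          tsum_ofReal_rpow_neg_mul_exp_le hlam hα0 hbound hε.1.le hsum
      _ ≤ ENNReal.ofReal A * (ENNReal.ofReal I + ENNReal.ofReal K) := by
          gcongr 1
          exact lintegral_Ioi_rpow_mul_exp_mul_le hα0 (hlam 0) hγ hγanti hε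
      _ = ENNReal.ofReal (A * (I + K)) := by
          rw [ENNReal.ofReal_mul hA.le, ENNReal.ofReal_add hI hK]
      _ ≤ ENNReal.ofReal (A * (1 + K) * (1 + I)) :=
          ENNReal.ofReal_le_ofReal (by nlinarith [mul_nonneg hK hI])
  · rw [tsum_eq_zero_of_not_summable hsum]
    positivity

/-- Key spectral summation estimate: if `∑_i e^{-2λ_i u} ≤ e^{-λ₁ u} γ(u)` for a
decreasing positive `γ`, then for some `c > 0` and all `ε ∈ (0,1]`,
`∑_i λ_i^{-(1+α)} e^{-2λ_i ε} ≤ c (1 + ∫_ε^1 γ(u) u^α du)`. -/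
theorem spectral_sum_estimate (lam : ℕ → ℝ) (hlam : ∀ i, 0 < lam i)
    (α : ℝ) (hα : α ∈ Set.Ioc (0 : ℝ) 1)
    (γ : ℝ → ℝ) (hγpos : ∀ u : ℝ, 0 < u → 0 < γ u)
    (hγanti : AntitoneOn γ (Set.Ioi 0))
    (hbound : ∀ u : ℝ, 0 < u →
      ∑' i, Real.exp (-2 * lam i * u) ≤ Real.exp (-lam 0 * u) * γ u) :
    ∃ c : ℝ, 0 < c ∧ ∀ ε : ℝ, ε ∈ Set.Ioc (0 : ℝ) 1 →
      ∑' i, (lam i) ^ (-(1 + α)) * Real.exp (-2 * lam i * ε)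
        ≤ c * (1 + ∫ u in ε..1, γ u * u ^ α) :=
  spectral_sum_estimate_general lam hlam α hα γ hγanti hbound
end

section
/- Let (P_t)_{t≥0} be a Markov semigroup on L²(μ) satisfying the Poincaré inequality ‖P_s f - μ(f)‖_{L²(μ)} ≤ e^{-λ₁ s}‖f - μ(f)‖_{L²(μ)}, and let (S_t^B) be an independent subordinator with Laplace exponent B. Then the subordinated semigroup P_t^B f = ∫_{[0,∞)} P_s f dP_{S_t^B}(s) satisfies ‖P_t^B f - μ(f)‖_{L²(μ)} ≤ e^{-tB(λ₁)} ‖f - μ(f)‖_{L²(μ)} for all t > 0 and f ∈ L²(μ). -/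
open MeasureTheory Set
open scoped ENNReal

/-!
Subordination averages the semigroup: `P_t^B f - μ(f) = ∫ (P_s f - μ(f)) dν_t(s)`. By Minkowski's
integral inequality its `L²(μ)` norm is at most `∫ ‖P_s f - μ(f)‖₂ dν_t(s)`, which the Poincaré
inequality bounds by `‖f - μ(f)‖₂ ∫ e^{-λ₁ s} dν_t(s)`, and the last integral is `e^{-tB(λ₁)}`.

Minkowski's inequality for `p = 2` is proved by duality: for `Φ x = ∫⁻ g(s, x) dν(s)` and a bounded
`ψ ≤ Φ`, Tonelli and Cauchy–Schwarz give `‖ψ‖₂² ≤ ∫ ψ Φ ≤ ‖ψ‖₂ ∫ ‖g(s, ·)‖₂ dν`; the truncations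
`min Φ n` have finite norm, so `‖ψ‖₂` can be cancelled, and they increase to `Φ`.
-/

section Minkowski

variable {α β : Type*} [MeasurableSpace α] [MeasurableSpace β] {ν : Measure α} {μ : Measure β}

lemma eLpNorm_two_sq_eq_lintegral_sq (ψ : β → ℝ≥0∞) :
    eLpNorm ψ 2 μ ^ 2 = ∫⁻ x, ψ x ^ 2 ∂μ := by
  simpa using eLpNorm_nnreal_pow_eq_lintegral (f := ψ) (μ := μ) (p := 2) two_ne_zero

lemma lintegral_mul_le_eLpNorm_two_mul_eLpNorm_two {φ ψ : β → ℝ≥0∞}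
    (hφ : AEMeasurable φ μ) (hψ : AEMeasurable ψ μ) :
    ∫⁻ x, φ x * ψ x ∂μ ≤ eLpNorm φ 2 μ * eLpNorm ψ 2 μ := by
  simpa [eLpNorm_eq_lintegral_rpow_enorm_toReal two_ne_zero ENNReal.ofNat_ne_top] using
    ENNReal.lintegral_mul_le_Lp_mul_Lq μ Real.HolderConjugate.two_two hφ hψ

lemma eLpNorm_two_le_lintegral_eLpNorm_two_of_le [SFinite ν] [IsFiniteMeasure μ]
    {g : α × β → ℝ≥0∞} (hg : AEMeasurable g (ν.prod μ)) {ψ : β → ℝ≥0∞} (hψ : AEMeasurable ψ μ)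
    {C : ℝ≥0∞} (hC : C ≠ ∞) (hψC : ∀ x, ψ x ≤ C) (hψg : ∀ x, ψ x ≤ ∫⁻ s, g (s, x) ∂ν) :
    eLpNorm ψ 2 μ ≤ ∫⁻ s, eLpNorm (fun x ↦ g (s, x)) 2 μ ∂ν := by
  set N := eLpNorm ψ 2 μ
  have hN : N ≠ ∞ := ne_top_of_le_ne_top
    (ENNReal.mul_ne_top hC (by simp)) (eLpNorm_le_of_ae_enorm_bound (ae_of_all _ hψC))
  have hfiber : ∀ᵐ s ∂ν, AEMeasurable (fun x ↦ g (s, x)) μ :=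
    hg.aestronglyMeasurable.prodMk_left.mono fun _ h ↦ h.aemeasurable
  have key : N * N ≤ N * ∫⁻ s, eLpNorm (fun x ↦ g (s, x)) 2 μ ∂ν := calc
    N * N = ∫⁻ x, ψ x * ψ x ∂μ := by rw [← sq, eLpNorm_two_sq_eq_lintegral_sq]; simp only [sq]
    _ ≤ ∫⁻ x, ψ x * ∫⁻ s, g (s, x) ∂ν ∂μ := lintegral_mono fun x ↦ by gcongr; exact hψg x
    _ = ∫⁻ x, ∫⁻ s, ψ x * g (s, x) ∂ν ∂μ := lintegral_congr fun x ↦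
      (lintegral_const_mul' _ _ (ne_top_of_le_ne_top hC (hψC x))).symm
    _ = ∫⁻ s, ∫⁻ x, ψ x * g (s, x) ∂μ ∂ν :=
      lintegral_lintegral_swap (hψ.comp_fst.mul hg.prod_swap)
    _ ≤ ∫⁻ s, N * eLpNorm (fun x ↦ g (s, x)) 2 μ ∂ν := lintegral_mono_ae <| hfiber.mono
      fun _ hs ↦ lintegral_mul_le_eLpNorm_two_mul_eLpNorm_two hψ hs
    _ = N * ∫⁻ s, eLpNorm (fun x ↦ g (s, x)) 2 μ ∂ν := lintegral_const_mul' _ _ hN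
  rcases eq_or_ne N 0 with hN0 | hN0
  · exact hN0 ▸ zero_le
  · exact (ENNReal.mul_le_mul_iff_right hN0 hN).mp key

theorem eLpNorm_two_lintegral_le_lintegral_eLpNorm_two [SFinite ν] [IsFiniteMeasure μ]
    {g : α × β → ℝ≥0∞} (hg : AEMeasurable g (ν.prod μ)) :
    eLpNorm (fun x ↦ ∫⁻ s, g (s, x) ∂ν) 2 μ ≤ ∫⁻ s, eLpNorm (fun x ↦ g (s, x)) 2 μ ∂ν := by
  set Φ := fun x ↦ ∫⁻ s, g (s, x) ∂ν
  have hΦ : AEMeasurable Φ μ := hg.lintegral_prod_left'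
  have htrunc (n : ℕ) :
      eLpNorm (fun x ↦ min (Φ x) n) 2 μ ≤ ∫⁻ s, eLpNorm (fun x ↦ g (s, x)) 2 μ ∂ν :=
    eLpNorm_two_le_lintegral_eLpNorm_two_of_le hg (hΦ.min aemeasurable_const)
      (ENNReal.natCast_ne_top n) (fun _ ↦ min_le_right _ _) (fun _ ↦ min_le_left _ _)
  have hsup (x : β) : Φ x ^ 2 = ⨆ n : ℕ, min (Φ x) n ^ 2 := by
    rw [← ENNReal.iSup_pow, ← inf_iSup_eq, ENNReal.iSup_natCast, inf_top_eq]
  rw [← ENNReal.pow_le_pow_left_iff two_ne_zero, eLpNorm_two_sq_eq_lintegral_sq]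
  calc ∫⁻ x, Φ x ^ 2 ∂μ = ⨆ n : ℕ, ∫⁻ x, min (Φ x) n ^ 2 ∂μ := by
        simp_rw [hsup]
        exact lintegral_iSup' (fun n ↦ (hΦ.min aemeasurable_const).pow_const 2)
          (ae_of_all _ fun x n m hnm ↦ by dsimp only; gcongr)
    _ ≤ _ := iSup_le fun n ↦ by rw [← eLpNorm_two_sq_eq_lintegral_sq]; gcongr; exact htrunc n

theorem eLpNorm_two_integral_le_lintegral_eLpNorm_two {E : Type*} [NormedAddCommGroup E]
    [NormedSpace ℝ E] [SFinite ν] [IsFiniteMeasure μ] {F : α × β → E}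
    (hF : AEStronglyMeasurable F (ν.prod μ)) :
    eLpNorm (fun x ↦ ∫ s, F (s, x) ∂ν) 2 μ ≤ ∫⁻ s, eLpNorm (fun x ↦ F (s, x)) 2 μ ∂ν := calc
  eLpNorm (fun x ↦ ∫ s, F (s, x) ∂ν) 2 μ ≤ eLpNorm (fun x ↦ ∫⁻ s, ‖F (s, x)‖ₑ ∂ν) 2 μ :=
    eLpNorm_mono_enorm fun x ↦ by rw [enorm_eq_self]; exact enorm_integral_le_lintegral_enorm _
  _ ≤ ∫⁻ s, eLpNorm (fun x ↦ ‖F (s, x)‖ₑ) 2 μ ∂ν :=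
    eLpNorm_two_lintegral_le_lintegral_eLpNorm_two (g := fun q ↦ ‖F q‖ₑ) hF.enorm
  _ = ∫⁻ s, eLpNorm (fun x ↦ F (s, x)) 2 μ ∂ν := by simp only [eLpNorm_enorm]

end Minkowski

/-- If `(P_s)` satisfies the Poincaré inequality with rate `λ₁` and `(ν_t)` are
the laws of an independent subordinator with Laplace exponent `B`, then the
subordinated semigroup `P_t^B f = ∫ P_s f dν_t(s)` satisfies the Poincaré
inequality with rate `B(λ₁)`:
`‖P_t^B f - μ(f)‖_{L²(μ)} ≤ e^{-tB(λ₁)} ‖f - μ(f)‖_{L²(μ)}`. -/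
theorem subordinated_poincare
    {M : Type*} [MeasurableSpace M] (μ : Measure M) [IsProbabilityMeasure μ]
    (P : ℝ → (M → ℝ) → (M → ℝ)) (B : ℝ → ℝ) (ν : ℝ → Measure ℝ)
    (lam1 : ℝ) (hlam1 : 0 < lam1)
    (hν : ∀ t : ℝ, 0 ≤ t → IsProbabilityMeasure (ν t))
    (hsupp : ∀ t : ℝ, 0 ≤ t → (ν t) (Set.Iio 0) = 0)
    (hlaplace : ∀ t l : ℝ, 0 ≤ t → 0 ≤ l →
      ∫ s, Real.exp (-l * s) ∂(ν t) = Real.exp (-t * B l))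
    (hPoincare : ∀ s : ℝ, 0 ≤ s → ∀ f : M → ℝ, MemLp f 2 μ →
      eLpNorm (fun x => P s f x - ∫ y, f y ∂μ) 2 μ
        ≤ ENNReal.ofReal (Real.exp (-lam1 * s)) *
          eLpNorm (fun x => f x - ∫ y, f y ∂μ) 2 μ) :
    ∀ t : ℝ, 0 < t → ∀ f : M → ℝ, MemLp f 2 μ →
      AEStronglyMeasurable (fun q : ℝ × M => P q.1 f q.2) ((ν t).prod μ) →
      Integrable (fun q : ℝ × M => P q.1 f q.2) ((ν t).prod μ) →
      eLpNorm (fun x => (∫ s, P s f x ∂(ν t)) - ∫ y, f y ∂μ) 2 μ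
        ≤ ENNReal.ofReal (Real.exp (-t * B lam1)) *
          eLpNorm (fun x => f x - ∫ y, f y ∂μ) 2 μ := by
  intro t ht f hf _ hint
  have := hν t ht.le
  have hnonneg : ∀ᵐ s ∂ν t, 0 ≤ s := ae_iff.2 (by simpa [Iio] using hsupp t ht.le)
  have hlaplace_lintegral : ∫⁻ s, ENNReal.ofReal (Real.exp (-lam1 * s)) ∂ν t
      = ENNReal.ofReal (Real.exp (-t * B lam1)) := by
    have h := hlaplace t lam1 ht.le hlam1.le
    rw [← h, ofReal_integral_eq_lintegral_ofReal
      (Integrable.of_integral_ne_zero (h ▸ (Real.exp_pos _).ne'))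
      (ae_of_all _ fun _ ↦ (Real.exp_pos _).le)]
  calc eLpNorm (fun x => (∫ s, P s f x ∂(ν t)) - ∫ y, f y ∂μ) 2 μ
      = eLpNorm (fun x => ∫ s, (P s f x - ∫ y, f y ∂μ) ∂(ν t)) 2 μ :=
        eLpNorm_congr_ae <| hint.prod_left_ae.mono fun x hx ↦ by
          simp [integral_sub hx (integrable_const _)]
    _ ≤ ∫⁻ s, eLpNorm (fun x => P s f x - ∫ y, f y ∂μ) 2 μ ∂(ν t) :=
        eLpNorm_two_integral_le_lintegral_eLpNorm_two (F := fun q ↦ P q.1 f q.2 - ∫ y, f y ∂μ)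
          (hint.aestronglyMeasurable.sub aestronglyMeasurable_const)
    _ ≤ ∫⁻ s, ENNReal.ofReal (Real.exp (-lam1 * s)) *
          eLpNorm (fun x => f x - ∫ y, f y ∂μ) 2 μ ∂(ν t) :=
        lintegral_mono_ae <| hnonneg.mono fun s hs ↦ hPoincare s hs f hf
    _ = _ := by
      have hf_centered : eLpNorm (fun x => f x - ∫ y, f y ∂μ) 2 μ ≠ ∞ :=
        (hf.sub (memLp_const _)).eLpNorm_ne_top
      rw [lintegral_mul_const' _ _ hf_centered, hlaplace_lintegral]
end
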